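/- arXiv:0706.3981 — 2 statements merged into one kernel-verified Lean document; each statement's English description precedes it below -/
import Mathlib

section
/- Let M be a closed connected smooth manifold and X a cohomology-free smooth vector field on M. If u : M → ℝ is a smooth function with Xu = 0 on M, then u is constant. (The kernel of the Lie derivative operator on smooth functions is one-dimensional, consisting of the constants.) -/
/-!
Solve `Xv = u - c` using that `X` is cohomology free, and put `w = (u - c) v`. Since `Xu = 0`,
`Xw = (u - c)²`. At a maximum and at a minimum of `w` on the compact manifold `Xw` vanishes, so
`u = c` and hence `w = 0` there; thus `w ≡ 0`. On the open set `{u ≠ c}` this forces `v = 0`,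
hence `Xv = 0`, contradicting `Xv = u - c ≠ 0`.
-/

open Manifold

theorem eq_zero_of_forall_isLocalExtr {α : Type*} [TopologicalSpace α] [CompactSpace α]
    {w : α → ℝ} (hw : Continuous w) (hextr : ∀ p, IsLocalExtr w p → w p = 0) (x : α) :
    w x = 0 := by
  obtain ⟨p, -, hp⟩ := isCompact_univ.exists_isMaxOn ⟨x, trivial⟩ hw.continuousOn
  obtain ⟨q, -, hq⟩ := isCompact_univ.exists_isMinOn ⟨x, trivial⟩ hw.continuousOn
  have hp0 := hextr p (.inr (hp.isLocalMax Filter.univ_mem))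
  have hq0 := hextr q (.inl (hq.isLocalMin Filter.univ_mem))
  exact le_antisymm (hp0 ▸ hp (Set.mem_univ x)) (hq0 ▸ hq (Set.mem_univ x))

section

variable {E : Type*} [NormedAddCommGroup E] [NormedSpace ℝ E]
  {H : Type*} [TopologicalSpace H] {I : ModelWithCorners ℝ E H}
  {M : Type*} [TopologicalSpace M] [ChartedSpace H M]

theorem IsLocalExtr.mfderiv_eq_zero [I.Boundaryless] {f : M → ℝ} {x : M}
    (hf : IsLocalExtr f x) : mfderiv I 𝓘(ℝ) f x = 0 := by
  by_cases hdiff : MDifferentiableAt I 𝓘(ℝ) f x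
  swap; · exact mfderiv_zero_of_not_mdifferentiableAt hdiff
  have hf' : IsLocalExtr f ((extChartAt I x).symm (extChartAt I x x)) := by
    rwa [extChartAt_to_inv]
  have hchart : IsLocalExtr (f ∘ (extChartAt I x).symm) (extChartAt I x x) :=
    hf'.comp_tendsto (continuousAt_extChartAt_symm x)
  rw [hdiff.mfderiv, I.range_eq_univ, fderivWithin_univ]
  exact hchart.fderiv_eq_zero

/-- `mfderivAlong X u` is the function `Xu`. It is real-valued, whereas `mfderiv I 𝓘(ℝ) u x (X x)`
lives in the type synonym `TangentSpace 𝓘(ℝ) (u x)`, on which real arithmetic does not elaborate. -/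
noncomputable def mfderivAlong (X : (x : M) → TangentSpace I x) (u : M → ℝ) (x : M) : ℝ :=
  mfderiv I 𝓘(ℝ) u x (X x)

theorem mfderivAlong_sub_const_mul (X : (x : M) → TangentSpace I x) {u v : M → ℝ} {x : M}
    (c : ℝ) (hu : MDifferentiableAt I 𝓘(ℝ) u x) (hv : MDifferentiableAt I 𝓘(ℝ) v x) :
    mfderivAlong X ((fun y ↦ u y - c) * v) x =
      (u x - c) * mfderivAlong X v x + v x * mfderivAlong X u x := by
  have hsub : HasMFDerivAt I 𝓘(ℝ) (fun y ↦ u y - c) x (mfderiv I 𝓘(ℝ) u x) :=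
    (hu.hasMFDerivAt.sub (hasMFDerivAt_const c x)).congr_mfderiv (sub_zero _)
  rw [mfderivAlong, (hsub.mul hv.hasMFDerivAt).mfderiv]
  rfl

theorem IsLocalExtr.mfderivAlong_eq_zero [I.Boundaryless] (X : (x : M) → TangentSpace I x)
    {f : M → ℝ} {x : M} (hf : IsLocalExtr f x) : mfderivAlong X f x = 0 := by
  rw [mfderivAlong, hf.mfderiv_eq_zero]
  rfl

theorem eq_of_mfderivAlong_eq_zero_of_mfderivAlong_eq_sub [I.Boundaryless] [CompactSpace M]
    (X : (x : M) → TangentSpace I x) {u v : M → ℝ} {c : ℝ}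
    (hu : MDifferentiable I 𝓘(ℝ) u) (hv : MDifferentiable I 𝓘(ℝ) v)
    (hXu : ∀ x, mfderivAlong X u x = 0) (hXv : ∀ x, mfderivAlong X v x = u x - c)
    (x : M) : u x = c := by
  set w : M → ℝ := (fun y ↦ u y - c) * v
  have hXw : ∀ y, mfderivAlong X w y = (u y - c) ^ 2 := fun y ↦ by
    rw [mfderivAlong_sub_const_mul X c (hu y) (hv y), hXu, hXv]
    ring
  have hw_zero : ∀ y, w y = 0 := by
    refine eq_zero_of_forall_isLocalExtr ((hu.sub mdifferentiable_const).mul hv).continuous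
      fun p hp ↦ ?_
    have hup : u p - c = 0 := pow_eq_zero_iff two_ne_zero |>.mp <| by
      rw [← hXw p, hp.mfderivAlong_eq_zero]
    simp [w, hup]
  by_contra hx
  have hv_zero : v =ᶠ[nhds x] fun _ ↦ 0 := by
    filter_upwards [(isOpen_ne_fun hu.continuous continuous_const).mem_nhds hx] with y hy
    exact (mul_eq_zero.mp (hw_zero y)).resolve_left (sub_ne_zero.mpr hy)
  have hXvx := hXv x
  rw [mfderivAlong, hv_zero.mfderiv_eq, mfderiv_const] at hXvx
  exact hx (sub_eq_zero.mp hXvx.symm)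

end

theorem stmt6_general
    {E : Type*} [NormedAddCommGroup E] [NormedSpace ℝ E]
    {H : Type*} [TopologicalSpace H] (I : ModelWithCorners ℝ E H) [I.Boundaryless]
    {M : Type*} [TopologicalSpace M] [ChartedSpace H M]
    [CompactSpace M]
    (X : (x : M) → TangentSpace I x)
    (hCF : ∀ f : M → ℝ, ContMDiff I 𝓘(ℝ) (⊤ : ℕ∞) f →
      ∃ c : ℝ, ∃ u : M → ℝ, ContMDiff I 𝓘(ℝ) (⊤ : ℕ∞) u ∧
        ∀ x, mfderiv I 𝓘(ℝ) u x (X x) = f x - c)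
    (u : M → ℝ) (hu : ContMDiff I 𝓘(ℝ) (⊤ : ℕ∞) u)
    (h : ∀ x, mfderiv I 𝓘(ℝ) u x (X x) = 0) :
    ∃ c : ℝ, ∀ x, u x = c := by
  obtain ⟨c, v, hv, hXv⟩ := hCF u hu
  exact ⟨c, eq_of_mfderivAlong_eq_zero_of_mfderivAlong_eq_sub X (hu.mdifferentiable (by simp))
    (hv.mdifferentiable (by simp)) h hXv⟩

theorem stmt6
    {E : Type*} [NormedAddCommGroup E] [NormedSpace ℝ E] [FiniteDimensional ℝ E]
    {H : Type*} [TopologicalSpace H] (I : ModelWithCorners ℝ E H) [I.Boundaryless]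
    {M : Type*} [TopologicalSpace M] [ChartedSpace H M] [IsManifold I (⊤ : ℕ∞) M]
    [CompactSpace M] [ConnectedSpace M]
    (X : (x : M) → TangentSpace I x)
    (hX : ContMDiff I I.tangent (⊤ : ℕ∞) (fun x => (⟨x, X x⟩ : TangentBundle I M)))
    (hCF : ∀ f : M → ℝ, ContMDiff I 𝓘(ℝ) (⊤ : ℕ∞) f →
      ∃ c : ℝ, ∃ u : M → ℝ, ContMDiff I 𝓘(ℝ) (⊤ : ℕ∞) u ∧
        ∀ x, mfderiv I 𝓘(ℝ) u x (X x) = f x - c)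
    (u : M → ℝ) (hu : ContMDiff I 𝓘(ℝ) (⊤ : ℕ∞) u)
    (h : ∀ x, mfderiv I 𝓘(ℝ) u x (X x) = 0) :
    ∃ c : ℝ, ∀ x, u x = c :=
  stmt6_general I X hCF u hu h
end

section
/- Let H be a real Hilbert space, let Z and Y be normed real vector spaces, let K : H → Z be a compact continuous linear operator, let D be a linear subspace of H, and let L : D → Y be a linear map. Assume: (i) there is a constant C > 0 such that ‖f‖_H ≤ C(‖K f‖_Z + ‖L f‖_Y) for all f ∈ D; (ii) for every sequence (f_j) in D which converges weakly in H to some f and satisfies ‖L f_j‖_Y → 0, one has f = 0. Then there exists a constant C' > 0 such that ‖f‖_H ≤ C' ‖L f‖_Y for all f ∈ D. (Abstract form of the a priori estimate underlying the Chen–Chi theorem that globally hypoelliptic vector fields are C^∞-stable.) -/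
/-!
Argue by contradiction: otherwise there are unit vectors `uₙ ∈ D` with `L uₙ → 0`. A subsequence
converges weakly (sequential Banach–Alaoglu on the separable closed span of the `uₙ`), and by (ii)
its weak limit is `0`. The compact operator `K` turns weak convergence to `0` into norm
convergence, so the right-hand side of (i) tends to `0` along the subsequence, while the
left-hand side is constantly `1`.
-/

open Filter Topology

theorem LinearMap.exists_seq_norm_eq_one_of_not_bounded_below {𝕜 E Y : Type*} [RCLike 𝕜]
    [NormedAddCommGroup E] [NormedSpace 𝕜 E] [NormedAddCommGroup Y] [NormedSpace 𝕜 Y]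
    (L : E →ₗ[𝕜] Y) (hL : ¬ ∃ C : ℝ, 0 < C ∧ ∀ f, ‖f‖ ≤ C * ‖L f‖) :
    ∃ u : ℕ → E, (∀ n, ‖u n‖ = 1) ∧ Tendsto (fun n => ‖L (u n)‖) atTop (𝓝 0) := by
  push Not at hL
  choose f hf using fun n : ℕ => hL (n + 1) n.cast_add_one_pos
  have hf0 : ∀ n, f n ≠ 0 := fun n h0 => by simpa [h0] using hf n
  refine ⟨fun n => (‖f n‖⁻¹ : 𝕜) • f n, fun n => norm_smul_inv_norm (hf0 n), ?_⟩
  refine squeeze_zero (fun n => norm_nonneg _) (fun n => ?_) tendsto_one_div_add_atTop_nhds_zero_nat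
  rw [map_smul, norm_smul, norm_inv, RCLike.norm_ofReal, abs_norm,
    inv_mul_le_iff₀ (norm_pos_iff.2 (hf0 n)), mul_one_div, le_div_iff₀ n.cast_add_one_pos]
  nlinarith [hf n]

theorem exists_subseq_forall_inner_tendsto_of_separable {E : Type*} [NormedAddCommGroup E]
    [InnerProductSpace ℝ E] [CompleteSpace E] [TopologicalSpace.SeparableSpace E]
    {g : ℕ → E} {B : ℝ} (hB : ∀ n, ‖g n‖ ≤ B) :
    ∃ (a : E) (φ : ℕ → ℕ), StrictMono φ ∧
      ∀ y, Tendsto (fun n => (inner ℝ (g (φ n)) y : ℝ)) atTop (𝓝 (inner ℝ a y)) := by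
  let ℓ : ℕ → WeakDual ℝ E := fun n =>
    StrongDual.toWeakDual (InnerProductSpace.toDual ℝ E (g n))
  have hℓ : ∀ n, ℓ n ∈ WeakDual.toStrongDual ⁻¹' Metric.closedBall 0 B := fun n => by
    simpa [ℓ] using hB n
  obtain ⟨ℓ₀, -, φ, hφ, hlim⟩ := WeakDual.isSeqCompact_closedBall ℝ E 0 B hℓ
  refine ⟨(InnerProductSpace.toDual ℝ E).symm (WeakDual.toStrongDual ℓ₀), φ, hφ, fun y => ?_⟩
  rw [InnerProductSpace.toDual_symm_apply]
  exact ((WeakDual.eval_continuous y).tendsto ℓ₀).comp hlim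

theorem exists_subseq_forall_inner_tendsto {H : Type*} [NormedAddCommGroup H]
    [InnerProductSpace ℝ H] [CompleteSpace H] {g : ℕ → H} {B : ℝ} (hB : ∀ n, ‖g n‖ ≤ B) :
    ∃ (a : H) (φ : ℕ → ℕ), StrictMono φ ∧
      ∀ y, Tendsto (fun n => (inner ℝ (g (φ n)) y : ℝ)) atTop (𝓝 (inner ℝ a y)) := by
  set M := (Submodule.span ℝ (Set.range g)).topologicalClosure
  have : TopologicalSpace.SeparableSpace M := by
    refine TopologicalSpace.IsSeparable.separableSpace ?_
    rw [Submodule.topologicalClosure_coe]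
    exact (Set.countable_range g).isSeparable.span.closure
  let g' : ℕ → M := fun n =>
    ⟨g n, Submodule.le_topologicalClosure _ (Submodule.subset_span ⟨n, rfl⟩)⟩
  obtain ⟨a, φ, hφ, ha⟩ := exists_subseq_forall_inner_tendsto_of_separable (g := g') hB
  -- `g n` and `a` lie in `M`, so they only see the component of `y` in `M`
  refine ⟨a, φ, hφ, fun y => ?_⟩
  simpa [g'] using ha (M.orthogonalProjectionOnto y)

theorem tendsto_dual_of_forall_inner_tendsto {H : Type*} [NormedAddCommGroup H]
    [InnerProductSpace ℝ H] [CompleteSpace H] {u : ℕ → H} {a : H}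
    (hu : ∀ y, Tendsto (fun n => (inner ℝ (u n) y : ℝ)) atTop (𝓝 (inner ℝ a y)))
    (ℓ : StrongDual ℝ H) : Tendsto (fun n => ℓ (u n)) atTop (𝓝 (ℓ a)) := by
  simpa [real_inner_comm ((InnerProductSpace.toDual ℝ H).symm ℓ)]
    using hu ((InnerProductSpace.toDual ℝ H).symm ℓ)

theorem IsCompactOperator.tendsto_zero_of_weakly_tendsto_zero {𝕜 E F : Type*} [RCLike 𝕜]
    [NormedAddCommGroup E] [NormedSpace 𝕜 E] [NormedAddCommGroup F] [NormedSpace 𝕜 F]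
    {T : E →L[𝕜] F} (hT : IsCompactOperator T) {u : ℕ → E} {B : ℝ} (hB : ∀ n, ‖u n‖ ≤ B)
    (hu : ∀ ℓ : StrongDual 𝕜 E, Tendsto (fun n => ℓ (u n)) atTop (𝓝 0)) :
    Tendsto (fun n => T (u n)) atTop (𝓝 0) := by
  have hmem : ∀ n, T (u n) ∈ closure (T '' Metric.closedBall 0 B) := fun n =>
    subset_closure ⟨u n, mem_closedBall_zero_iff.2 (hB n), rfl⟩
  have hcpt := hT.isCompact_closure_image_closedBall (f := (T : E →ₗ[𝕜] F)) B
  refine hcpt.tendsto_nhds_of_unique_mapClusterPt (Eventually.of_forall hmem) fun z _ hz =>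
      SeparatingDual.eq_zero_of_forall_dual_eq_zero (R := 𝕜) fun ℓ => ?_
  have hℓz : MapClusterPt (ℓ z) atTop (fun n => ℓ (T (u n))) :=
    hz.continuousAt_comp ℓ.continuous.continuousAt
  exact eq_of_nhds_neBot (hℓz.neBot.mono (inf_le_inf_left _ (hu (ℓ.comp T))))

theorem stmt12_general
    {H : Type*} [NormedAddCommGroup H] [InnerProductSpace ℝ H] [CompleteSpace H]
    {Z : Type*} [NormedAddCommGroup Z] [NormedSpace ℝ Z]
    {Y : Type*} [NormedAddCommGroup Y] [NormedSpace ℝ Y]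
    (K : H →L[ℝ] Z) (hK : IsCompactOperator K)
    (D : Submodule ℝ H) (L : D →ₗ[ℝ] Y)
    (C : ℝ)
    (hest : ∀ f : D, ‖(f : H)‖ ≤ C * (‖K (f : H)‖ + ‖L f‖))
    (hweak : ∀ (fj : ℕ → D) (f : H),
      (∀ g : H, Tendsto (fun j => (inner ℝ ((fj j : H)) g : ℝ)) atTop (nhds (inner ℝ f g)))
      → Tendsto (fun j => ‖L (fj j)‖) atTop (nhds 0) → f = 0) :
    ∃ C' : ℝ, 0 < C' ∧ ∀ f : D, ‖(f : H)‖ ≤ C' * ‖L f‖ := by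
  by_contra hL
  obtain ⟨u, hu, hLu⟩ := L.exists_seq_norm_eq_one_of_not_bounded_below hL
  obtain ⟨a, φ, hφ, ha⟩ :=
    exists_subseq_forall_inner_tendsto (g := fun n => (u n : H)) (B := 1) fun n => (hu n).le
  have hLuφ := hLu.comp hφ.tendsto_atTop
  obtain rfl : a = 0 := hweak _ a ha hLuφ
  have hKuφ : Tendsto (fun n => ‖K (u (φ n))‖) atTop (𝓝 0) := by
    simpa using (hK.tendsto_zero_of_weakly_tendsto_zero (fun n => (hu (φ n)).le) fun ℓ => by
      simpa using tendsto_dual_of_forall_inner_tendsto ha ℓ).norm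
  have hrhs : Tendsto (fun n => C * (‖K (u (φ n))‖ + ‖L (u (φ n))‖)) atTop (𝓝 0) := by
    simpa using (hKuφ.add hLuφ).const_mul C
  have : (1 : ℝ) ≤ 0 := ge_of_tendsto' hrhs fun n => (hu (φ n)).symm.le.trans (hest (u (φ n)))
  exact one_pos.not_ge this

theorem stmt12
    {H : Type*} [NormedAddCommGroup H] [InnerProductSpace ℝ H] [CompleteSpace H]
    {Z : Type*} [NormedAddCommGroup Z] [NormedSpace ℝ Z]
    {Y : Type*} [NormedAddCommGroup Y] [NormedSpace ℝ Y]
    (K : H →L[ℝ] Z) (hK : IsCompactOperator K)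
    (D : Submodule ℝ H) (L : D →ₗ[ℝ] Y)
    (C : ℝ) (hC : 0 < C)
    (hest : ∀ f : D, ‖(f : H)‖ ≤ C * (‖K (f : H)‖ + ‖L f‖))
    (hweak : ∀ (fj : ℕ → D) (f : H),
      (∀ g : H, Tendsto (fun j => (inner ℝ ((fj j : H)) g : ℝ)) atTop (nhds (inner ℝ f g)))
      → Tendsto (fun j => ‖L (fj j)‖) atTop (nhds 0) → f = 0) :
    ∃ C' : ℝ, 0 < C' ∧ ∀ f : D, ‖(f : H)‖ ≤ C' * ‖L f‖ :=
  stmt12_general K hK D L C hest hweak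
end
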